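/- arXiv:2203.16967 — 6 statements merged into one kernel-verified Lean document; each statement's English description precedes it below -/
import Mathlib

section
/- If R is a complete ideal of a Lie algebra g, then g decomposes as a direct sum of ideals g = R ⊕ S, where S is the centralizer of R in g. -/
/-- If `R` is a complete ideal of a Lie algebra `g` (trivial center and
every derivation of `R` is inner), then `g = R ⊕ S` where `S` is the
centralizer of `R` in `g`, and both are ideals. -/
theorem stmt_8 {K g : Type*} [Field K] [LieRing g] [LieAlgebra K g]
    (R : LieIdeal K g)
    (hZ : ∀ x : R, (∀ y : R, ⁅x, y⁆ = 0) → x = 0)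
    (hInner : ∀ d : LieDerivation K R R, ∃ a : R, ∀ z : R, d z = ⁅a, z⁆) :
    ∃ S : LieIdeal K g,
      (S : Set g) = {x : g | ∀ r ∈ R, ⁅x, r⁆ = 0} ∧
      R ⊓ S = ⊥ ∧ R ⊔ S = ⊤ := by
  refine ⟨{ carrier := {x : g | ∀ r ∈ R, ⁅x, r⁆ = 0}
            add_mem' := ?_
            zero_mem' := ?_
            smul_mem' := ?_
            lie_mem := ?_ }, rfl, ?_, ?_⟩
  · intro a b ha hb r hr
    simp only [Set.mem_setOf_eq] at *
    rw [add_lie, ha r hr, hb r hr, add_zero]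
  · intro r hr; simp
  · intro c x hx r hr
    simp only [Set.mem_setOf_eq] at *
    rw [smul_lie, hx r hr, smul_zero]
  · intro x m hm r hr
    simp only [Set.mem_setOf_eq] at *
    have h1 : ⁅m, ⁅x, r⁆⁆ = 0 := hm _ (R.lie_mem hr)
    rw [lie_lie, hm r hr, h1, lie_zero, sub_zero]
  · rw [eq_bot_iff]
    intro x hx
    obtain ⟨hxR, hxS⟩ := hx
    have : (⟨x, hxR⟩ : R) = 0 := by
      apply hZ
      intro y
      ext
      exact hxS _ y.2
    simpa using congrArg Subtype.val this
  · rw [eq_top_iff]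
    intro x _
    -- build the derivation ad x on R
    set d : LieDerivation K R R :=
      { toFun := fun r => ⟨⁅x, (r : g)⁆, R.lie_mem r.2⟩
        map_add' := fun a b => by ext; simp
        map_smul' := fun c a => by ext; simp
        leibniz' := fun a b => by
          ext
          show ⁅x, ⁅(a : g), (b : g)⁆⁆ = ⁅(a : g), ⁅x, (b : g)⁆⁆ - ⁅(b : g), ⁅x, (a : g)⁆⁆
          rw [sub_eq_add_neg, lie_skew, leibniz_lie]
          abel } with hd
    obtain ⟨a, ha⟩ := hInner d
    have hmem : x - (a : g) ∈ {x : g | ∀ r ∈ R, ⁅x, r⁆ = 0} := by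
      intro r hr
      have := ha ⟨r, hr⟩
      have h2 : ⁅x, r⁆ = ⁅(a : g), r⁆ := by
        have := congrArg Subtype.val this
        exact this
      rw [sub_lie, h2, sub_self]
    have hx : x = (a : g) + (x - a) := by abel
    rw [hx]
    refine add_mem ((le_sup_left : R ≤ _) a.2) ?_
    exact (le_sup_right : _ ≤ R ⊔ _) hmem
end

section
/- Let g be a Lie algebra with complete ideal R. Then the centralizer S = {x ∈ g : [x, r] = 0 for all r ∈ R} is an ideal of g and R ∩ S = 0. -/
/-- If `R` is a complete ideal of a Lie algebra `g`, then the centralizer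
`S = {x | [x,r] = 0 for all r ∈ R}` is an ideal of `g` and `R ∩ S = 0`. -/
theorem stmt_9 {K g : Type*} [Field K] [LieRing g] [LieAlgebra K g]
    (R : LieIdeal K g)
    (hZ : ∀ x : R, (∀ y : R, ⁅x, y⁆ = 0) → x = 0)
    (hInner : ∀ d : LieDerivation K R R, ∃ a : R, ∀ z : R, d z = ⁅a, z⁆) :
    ∃ S : LieIdeal K g,
      (S : Set g) = {x : g | ∀ r ∈ R, ⁅x, r⁆ = 0} ∧ R ⊓ S = ⊥ := by
  refine ⟨{ carrier := {x : g | ∀ r ∈ R, ⁅x, r⁆ = 0}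
            add_mem' := ?_
            zero_mem' := ?_
            smul_mem' := ?_
            lie_mem := ?_ }, rfl, ?_⟩
  · intro a b ha hb r hr
    simp only [Set.mem_setOf_eq] at *
    rw [add_lie, ha r hr, hb r hr, add_zero]
  · intro r hr; simp
  · intro c a ha r hr
    simp only [Set.mem_setOf_eq] at *
    rw [smul_lie, ha r hr, smul_zero]
  · intro x m hm r hr
    simp only [Set.mem_setOf_eq] at *
    have h1 : ⁅x, r⁆ ∈ R := R.lie_mem hr
    rw [lie_lie, hm r hr, hm _ h1, lie_zero, sub_zero]
  · rw [eq_bot_iff]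
    intro x hx
    rcases hx with ⟨hxR, hxS⟩
    simp only [LieSubmodule.mem_bot]
    have : (⟨x, hxR⟩ : R) = 0 := by
      apply hZ
      intro y
      ext
      exact hxS (y : g) y.2
    exact congrArg Subtype.val this
end

section
/- Let R be the Leibniz algebra with basis {f_1,...,f_k, x_1,...,x_k} over ℂ with multiplication [f_i, x_i] = f_i and [x_i, f_i] = α_i f_i where α_i ∈ {−1, 0}. Then every derivation of R is inner, i.e., of the form R_a(z) = [z,a] for some a ∈ R; together with triviality of the center, R is complete. -/
/-- The bracket of the solvable Leibniz algebra `R(𝒜(k), k)` with basis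
`{f_1,…,f_k, x_1,…,x_k}` and multiplication `[f_i,x_i] = f_i`,
`[x_i,f_i] = α_i f_i` (all other products zero). A vector is a pair
`(a, b)` of coefficient tuples of the `f_i` and the `x_i` respectively. -/
def brRA {k : ℕ} (α : Fin k → ℂ) :
    ((Fin k → ℂ) × (Fin k → ℂ)) → ((Fin k → ℂ) × (Fin k → ℂ)) →
      ((Fin k → ℂ) × (Fin k → ℂ)) :=
  fun p q => (fun i => p.1 i * q.2 i + α i * (p.2 i * q.1 i), 0)

/-- basis vector f_i -/
def fbRA {k : ℕ} (i : Fin k) : (Fin k → ℂ) × (Fin k → ℂ) := (Pi.single i 1, 0)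

/-- basis vector x_i -/
def xbRA {k : ℕ} (i : Fin k) : (Fin k → ℂ) × (Fin k → ℂ) := (0, Pi.single i 1)

lemma brRA_fx {k : ℕ} (α : Fin k → ℂ) (i : Fin k) :
    brRA α (fbRA i) (xbRA i) = fbRA i := by
  unfold brRA fbRA xbRA
  refine Prod.ext ?_ rfl
  funext m
  by_cases h : m = i <;> simp [Pi.single_apply, h]

lemma brRA_fx0 {k : ℕ} (α : Fin k → ℂ) {i j : Fin k} (h : i ≠ j) :
    brRA α (fbRA i) (xbRA j) = 0 := by
  unfold brRA fbRA xbRA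
  refine Prod.ext ?_ rfl
  funext m
  by_cases h1 : m = i <;> by_cases h2 : m = j <;>
    simp [Pi.single_apply, h1, h2]
  all_goals first
  | exact h
  | exact h.symm

lemma brRA_xx {k : ℕ} (α : Fin k → ℂ) (i j : Fin k) :
    brRA α (xbRA i) (xbRA j) = 0 := by
  unfold brRA xbRA
  refine Prod.ext ?_ rfl
  funext m
  simp

/-- Every derivation of the Leibniz algebra `R(𝒜(k), k)` (with
`α_i ∈ {-1,0}`) is inner, i.e. of the form `R_a : z ↦ [z,a]`; together with
the triviality of the center, `R(𝒜(k), k)` is complete. -/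
theorem stmt_13 {k : ℕ} (α : Fin k → ℂ) (hα : ∀ i, α i = -1 ∨ α i = 0) :
    (∀ d : ((Fin k → ℂ) × (Fin k → ℂ)) →ₗ[ℂ] ((Fin k → ℂ) × (Fin k → ℂ)),
      (∀ p q, d (brRA α p q) = brRA α (d p) q + brRA α p (d q)) →
      ∃ a : (Fin k → ℂ) × (Fin k → ℂ), ∀ z, d z = brRA α z a) ∧
    (∀ v : (Fin k → ℂ) × (Fin k → ℂ),
      (∀ w, brRA α v w = 0 ∧ brRA α w v = 0) → v = 0) := by
  classical
  constructor
  · intro d hd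
    -- derivation identity on [f_i, x_i] = f_i
    have hA : ∀ i, d (fbRA i)
        = brRA α (d (fbRA i)) (xbRA i) + brRA α (fbRA i) (d (xbRA i)) := by
      intro i
      have := hd (fbRA i) (xbRA i)
      rwa [brRA_fx] at this
    -- A1 : second component of d f_i vanishes
    have A1 : ∀ i, (d (fbRA i)).2 = 0 := by
      intro i
      have := congrArg Prod.snd (hA i)
      simpa [brRA] using this
    -- A2 : off-diagonal first components of d f_i vanish
    have A2 : ∀ i m, m ≠ i → (d (fbRA i)).1 m = 0 := by
      intro i m hm
      have := congrFun (congrArg Prod.fst (hA i)) m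
      simpa [brRA, fbRA, xbRA, Pi.single_apply, hm] using this
    -- diagonal of second component of d x_i vanishes
    have B1d : ∀ i, (d (xbRA i)).2 i = 0 := by
      intro i
      have h := congrFun (congrArg Prod.fst (hA i)) i
      simp [brRA, fbRA, xbRA, Pi.single_apply] at h
      exact h
    -- off-diagonal of second component of d x_j vanishes
    have B1o : ∀ i j, i ≠ j → (d (xbRA j)).2 i = 0 := by
      intro i j hij
      have h := hd (fbRA i) (xbRA j)
      rw [brRA_fx0 α hij, map_zero] at h
      have := congrFun (congrArg Prod.fst h) i
      simpa [brRA, fbRA, xbRA, Pi.single_apply, hij, hij.symm] using this.symm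
    have B1 : ∀ j, (d (xbRA j)).2 = 0 := by
      intro j
      funext i
      by_cases h : i = j
      · subst h; exact B1d i
      · exact B1o i j h
    -- derivation identity on [x_i, x_j] = 0
    have hxx : ∀ i j (m : Fin k), (0:ℂ)
        = (d (xbRA i)).1 m * (Pi.single j 1 : Fin k → ℂ) m
          + α m * ((Pi.single i 1 : Fin k → ℂ) m * (d (xbRA j)).1 m) := by
      intro i j m
      have h := hd (xbRA i) (xbRA j)
      rw [brRA_xx, map_zero] at h
      have := congrFun (congrArg Prod.fst h) m
      simpa [brRA, xbRA] using this
    -- C : α i * μ i = - μ i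
    have C : ∀ i, α i * (d (xbRA i)).1 i = -(d (xbRA i)).1 i := by
      intro i
      have h := hxx i i i
      simp [Pi.single_apply] at h
      linear_combination -h
    -- B2 : off-diagonal first components of d x_i vanish
    have B2 : ∀ i m, m ≠ i → (d (xbRA i)).1 m = 0 := by
      intro i m hm
      have h := hxx i m m
      simpa [Pi.single_apply, hm] using h.symm
    -- decomposition of a vector in the basis
    have hdecomp : ∀ z : (Fin k → ℂ) × (Fin k → ℂ),
        z = ∑ i, z.1 i • fbRA i + ∑ i, z.2 i • xbRA i := by
      intro z
      refine Prod.ext ?_ ?_ <;>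
      · funext m
        simp [fbRA, xbRA, Prod.fst_sum, Prod.snd_sum, Finset.sum_apply, Pi.single_apply, mul_ite]
    refine ⟨(fun i => -(d (xbRA i)).1 i, fun i => (d (fbRA i)).1 i), ?_⟩
    intro z
    conv_lhs => rw [hdecomp z]
    rw [map_add, map_sum, map_sum]
    simp only [map_smul]
    refine Prod.ext ?_ ?_
    · funext m
      simp only [brRA, Prod.fst_add, Finset.sum_apply, Prod.fst_sum,
        Prod.smul_fst, Pi.add_apply, Pi.smul_apply, smul_eq_mul]
      rw [Finset.sum_eq_single m
          (fun i _ hi => by rw [A2 i m (Ne.symm hi), mul_zero])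
          (fun h => absurd (Finset.mem_univ m) h),
        Finset.sum_eq_single m
          (fun i _ hi => by rw [B2 i m (Ne.symm hi), mul_zero])
          (fun h => absurd (Finset.mem_univ m) h)]
      have := C m
      ring_nf
      linear_combination z.2 m * C m
    · simp [brRA, A1, B1, Prod.snd_sum]
  · intro v hv
    have h1 : ∀ i, v.1 i = 0 := by
      intro i
      have := congrFun (congrArg Prod.fst (hv (xbRA i)).1) i
      simpa [brRA, xbRA, Pi.single_apply] using this
    have h2 : ∀ i, v.2 i = 0 := by
      intro i
      have := congrFun (congrArg Prod.fst (hv (fbRA i)).2) i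
      simpa [brRA, fbRA, Pi.single_apply] using this
    exact Prod.ext (funext h1) (funext h2)
end

section
/- Let L be a Leibniz algebra over ℂ decomposed as L = R ∔ s (vector space direct sum) where s ≅ sl_2 is a subalgebra, R is a two-sided solvable ideal isomorphic to the direct sum of k copies of 2-dimensional solvable Leibniz algebras (basis {f_i, x_i}, [f_i,x_i] = f_i, [x_i,f_i] = α_i f_i, α_i ∈ {−1,0}), and [L,R] ⊆ N and [R,L] ⊆ N where N = span{f_1,...,f_k} is the nilradical of R. Then [R, s] = [s, R] = 0, so L = R ⊕ s is a direct sum of ideals. -/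
/-- Let `L` be a Leibniz algebra over `ℂ` with Levi decomposition
`L = R ∔ s`, where `s = span{e,f,h} ≅ sl₂` is a subalgebra and `R` is a
solvable two-sided ideal isomorphic to a direct sum of `k` copies of
2-dimensional solvable Leibniz algebras: `R` has basis `{f_i, x_i}` with
`[f_i,x_i] = f_i`, `[x_i,f_i] = α_i f_i`, `α_i ∈ {-1,0}`, and all products of
`R` with `s` land in the nilradical `N = span{f_1,…,f_k}` of `R`. Then
`[R, s] = [s, R] = 0`, i.e. `L = R ⊕ s` is a direct sum of ideals. -/
theorem stmt_14 {L : Type*} [AddCommGroup L] [Module ℂ L]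
    (br : L →ₗ[ℂ] L →ₗ[ℂ] L)
    (leib : ∀ x y z : L, br x (br y z) = br (br x y) z - br (br x z) y)
    (e f h : L)
    (hee : br e e = 0) (hff : br f f = 0) (hhh : br h h = 0)
    (heh : br e h = (2 : ℂ) • e) (hhe : br h e = -((2 : ℂ) • e))
    (hhf : br h f = (2 : ℂ) • f) (hfh : br f h = -((2 : ℂ) • f))
    (hef : br e f = h) (hfe : br f e = -h)
    {k : ℕ} (α : Fin k → ℂ) (hα : ∀ i, α i = -1 ∨ α i = 0)
    (fv xv : Fin k → L)
    (hind : LinearIndependent ℂ (Sum.elim fv xv))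
    (R : Submodule ℂ L)
    (hR : R = Submodule.span ℂ (Set.range fv ∪ Set.range xv))
    (hRideal : ∀ r ∈ R, ∀ y : L, br r y ∈ R ∧ br y r ∈ R)
    (hcompl : IsCompl R (Submodule.span ℂ ({e, f, h} : Set L)))
    (hfx : ∀ i j, br (fv i) (xv j) = if i = j then fv i else 0)
    (hxf : ∀ i j, br (xv i) (fv j) = if i = j then α i • fv i else 0)
    (hffv : ∀ i j, br (fv i) (fv j) = 0)
    (hxx : ∀ i j, br (xv i) (xv j) = 0)
    (N : Submodule ℂ L) (hN : N = Submodule.span ℂ (Set.range fv))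
    (hLRN : ∀ a ∈ ({e, f, h} : Set L), ∀ r ∈ R, br a r ∈ N ∧ br r a ∈ N) :
    ∀ r ∈ R, br r e = 0 ∧ br e r = 0 ∧ br r f = 0 ∧ br f r = 0 ∧
      br r h = 0 ∧ br h r = 0 := by
  have he : e ∈ ({e, f, h} : Set L) := by simp
  have hf' : f ∈ ({e, f, h} : Set L) := by simp
  have hh' : h ∈ ({e, f, h} : Set L) := by simp
  have fvR : ∀ i, fv i ∈ R := by
    intro i; rw [hR]; exact Submodule.subset_span (Or.inl ⟨i, rfl⟩)
  have xvR : ∀ i, xv i ∈ R := by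
    intro i; rw [hR]; exact Submodule.subset_span (Or.inr ⟨i, rfl⟩)
  have fvN : ∀ i, fv i ∈ N := by
    intro i; rw [hN]; exact Submodule.subset_span ⟨i, rfl⟩
  have NR : ∀ n ∈ N, n ∈ R := by
    intro n hn; rw [hN] at hn; rw [hR]
    exact Submodule.span_mono Set.subset_union_left hn
  -- products of N with N vanish
  have brfN : ∀ i, ∀ m ∈ N, br (fv i) m = 0 := by
    intro i m hm
    have hk : N ≤ LinearMap.ker (br (fv i)) := by
      rw [hN, Submodule.span_le]; rintro _ ⟨j, rfl⟩
      simpa [LinearMap.mem_ker] using hffv i j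
    exact hk hm
  have brNf : ∀ n ∈ N, ∀ j, br n (fv j) = 0 := by
    intro n hn j
    have hk : N ≤ LinearMap.ker (br.flip (fv j)) := by
      rw [hN, Submodule.span_le]; rintro _ ⟨i, rfl⟩
      simpa [LinearMap.mem_ker] using hffv i j
    exact hk hn
  have brNN : ∀ n ∈ N, ∀ m ∈ N, br n m = 0 := by
    intro n hn m hm
    have hk : N ≤ LinearMap.ker (br n) := by
      rw [hN, Submodule.span_le]; rintro _ ⟨j, rfl⟩
      simpa [LinearMap.mem_ker] using brNf n hn j
    exact hk hm
  -- image of N under right mult by xv i lies on line through fv i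
  have Pline : ∀ i, ∀ m ∈ N, ∃ c : ℂ, br m (xv i) = c • fv i := by
    intro i m hm
    have hk : N ≤ Submodule.comap (br.flip (xv i)) (Submodule.span ℂ {fv i}) := by
      rw [hN, Submodule.span_le]; rintro _ ⟨j, rfl⟩
      show br (fv j) (xv i) ∈ Submodule.span ℂ {fv i}
      rw [hfx j i]
      by_cases hji : j = i
      · subst hji; simp [Submodule.mem_span_singleton_self]
      · simp [hji]
    have h2 := hk hm
    rw [Submodule.mem_comap, Submodule.mem_span_singleton] at h2
    obtain ⟨c, hc⟩ := h2
    exact ⟨c, by simpa [LinearMap.flip_apply] using hc.symm⟩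
  -- br (fv i) a is on the line through fv i for a ∈ s
  have mline : ∀ i, ∀ a ∈ ({e, f, h} : Set L), ∃ c : ℂ, br (fv i) a = c • fv i := by
    intro i a ha
    have h1 := leib (fv i) a (xv i)
    have h2 : br (fv i) (br a (xv i)) = 0 := brfN i _ (hLRN a ha (xv i) (xvR i)).1
    have h3 : br (fv i) (xv i) = fv i := by rw [hfx]; simp
    rw [h2, h3] at h1
    have h4 : br (fv i) a = br (br (fv i) a) (xv i) := (sub_eq_zero.mp h1.symm).symm
    obtain ⟨c, hc⟩ := Pline i _ (hLRN a ha (fv i) (fvR i)).2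
    exact ⟨c, h4.trans hc⟩
  -- right multiplications commute on fv i
  have rho0 : ∀ i, ∀ a ∈ ({e, f, h} : Set L), ∀ b ∈ ({e, f, h} : Set L),
      br (fv i) (br a b) = 0 := by
    intro i a ha b hb
    obtain ⟨ca, hca⟩ := mline i a ha
    obtain ⟨cb, hcb⟩ := mline i b hb
    have h1 := leib (fv i) a b
    rw [hca, hcb, map_smul, map_smul, LinearMap.smul_apply, LinearMap.smul_apply,
      hca, hcb, smul_smul, smul_smul, mul_comm, sub_self] at h1
    exact h1
  have two_ne : (2 : ℂ) ≠ 0 := two_ne_zero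
  have rfe : ∀ i, br (fv i) e = 0 := by
    intro i
    have h1 := rho0 i e he h hh'
    rw [heh, map_smul] at h1
    exact (smul_eq_zero.mp h1).resolve_left two_ne
  have rff : ∀ i, br (fv i) f = 0 := by
    intro i
    have h1 := rho0 i h hh' f hf'
    rw [hhf, map_smul] at h1
    exact (smul_eq_zero.mp h1).resolve_left two_ne
  have rfh : ∀ i, br (fv i) h = 0 := by
    intro i
    have h1 := rho0 i e he f hf'
    rwa [hef] at h1
  -- right multiplication by s kills N
  have rNe : ∀ n ∈ N, br n e = 0 := by
    intro n hn
    have hk : N ≤ LinearMap.ker (br.flip e) := by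
      rw [hN, Submodule.span_le]; rintro _ ⟨i, rfl⟩
      simpa [LinearMap.mem_ker] using rfe i
    exact hk hn
  have rNf : ∀ n ∈ N, br n f = 0 := by
    intro n hn
    have hk : N ≤ LinearMap.ker (br.flip f) := by
      rw [hN, Submodule.span_le]; rintro _ ⟨i, rfl⟩
      simpa [LinearMap.mem_ker] using rff i
    exact hk hn
  have rNh : ∀ n ∈ N, br n h = 0 := by
    intro n hn
    have hk : N ≤ LinearMap.ker (br.flip h) := by
      rw [hN, Submodule.span_le]; rintro _ ⟨i, rfl⟩
      simpa [LinearMap.mem_ker] using rfh i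
    exact hk hn
  have rNS : ∀ b ∈ ({e, f, h} : Set L), ∀ n ∈ N, br n b = 0 := by
    intro b hb n hn
    simp only [Set.mem_insert_iff, Set.mem_singleton_iff] at hb
    rcases hb with rfl | rfl | rfl
    · exact rNe n hn
    · exact rNf n hn
    · exact rNh n hn
  -- left multiplication relation on N
  have lrel : ∀ a ∈ ({e, f, h} : Set L), ∀ b ∈ ({e, f, h} : Set L), ∀ n ∈ N,
      br a (br b n) = br (br a b) n := by
    intro a ha b hb n hn
    have h1 := leib a b n
    rw [rNS b hb _ (hLRN a ha n (NR n hn)).1, sub_zero] at h1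
    exact h1
  have lNh : ∀ n ∈ N, br h n = 0 := by
    intro n hn
    have hmN : br h n ∈ N := (hLRN h hh' n (NR n hn)).1
    have e1 : br h (br h n) = 0 := by
      have h1 := lrel h hh' h hh' n hn
      rw [hhh, map_zero] at h1; exact h1
    have hA : ∀ m ∈ N, br e (br f m) = br h m := by
      intro m hm
      have h1 := lrel e he f hf' m hm; rwa [hef] at h1
    have hfm : br f (br h n) = -((2 : ℂ) • br f n) := by
      have h1 := lrel f hf' h hh' n hn
      rw [hfh, map_neg, map_smul, LinearMap.neg_apply, LinearMap.smul_apply] at h1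
      exact h1
    have key : br h (br h n) = -((2 : ℂ) • br h n) := by
      rw [← hA (br h n) hmN, hfm, map_neg, map_smul, hA n hn]
    have h2 : -((2 : ℂ) • br h n) = 0 := by rw [← key, e1]
    have h3 : (2 : ℂ) • br h n = 0 := by simpa using h2
    exact (smul_eq_zero.mp h3).resolve_left two_ne
  have lNe : ∀ n ∈ N, br e n = 0 := by
    intro n hn
    have h1 := lrel e he h hh' n hn
    rw [lNh n hn, map_zero, heh, map_smul, LinearMap.smul_apply] at h1
    exact ((smul_eq_zero.mp h1.symm).resolve_left two_ne)
  have lNf : ∀ n ∈ N, br f n = 0 := by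
    intro n hn
    have h1 := lrel f hf' h hh' n hn
    rw [lNh n hn, map_zero, hfh, map_neg, map_smul, LinearMap.neg_apply,
      LinearMap.smul_apply] at h1
    have h2 : (2 : ℂ) • br f n = 0 := by
      have := h1.symm
      rwa [neg_eq_zero] at this
    exact (smul_eq_zero.mp h2).resolve_left two_ne
  have lNS : ∀ a ∈ ({e, f, h} : Set L), ∀ n ∈ N, br a n = 0 := by
    intro a ha n hn
    simp only [Set.mem_insert_iff, Set.mem_singleton_iff] at ha
    rcases ha with rfl | rfl | rfl
    · exact lNe n hn
    · exact lNf n hn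
    · exact lNh n hn
  -- right multiplication kills xv i
  have rxab : ∀ i, ∀ a ∈ ({e, f, h} : Set L), ∀ b ∈ ({e, f, h} : Set L),
      br (xv i) (br a b) = 0 := by
    intro i a ha b hb
    have h1 := leib (xv i) a b
    rw [rNS b hb _ (hLRN a ha (xv i) (xvR i)).2,
        rNS a ha _ (hLRN b hb (xv i) (xvR i)).2, sub_zero] at h1
    exact h1
  have rxe : ∀ i, br (xv i) e = 0 := by
    intro i
    have h1 := rxab i e he h hh'
    rw [heh, map_smul] at h1
    exact (smul_eq_zero.mp h1).resolve_left two_ne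
  have rxf : ∀ i, br (xv i) f = 0 := by
    intro i
    have h1 := rxab i h hh' f hf'
    rw [hhf, map_smul] at h1
    exact (smul_eq_zero.mp h1).resolve_left two_ne
  have rxh : ∀ i, br (xv i) h = 0 := by
    intro i
    have h1 := rxab i e he f hf'
    rwa [hef] at h1
  -- left multiplication kills xv i
  have lxab : ∀ a ∈ ({e, f, h} : Set L), ∀ b ∈ ({e, f, h} : Set L), ∀ i,
      br (br a b) (xv i) = 0 := by
    intro a ha b hb i
    have h1 := leib a b (xv i)
    rw [lNS a ha _ (hLRN b hb (xv i) (xvR i)).1,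
        rNS b hb _ (hLRN a ha (xv i) (xvR i)).1] at h1
    simpa using h1.symm
  have lxe : ∀ i, br e (xv i) = 0 := by
    intro i
    have h1 := lxab e he h hh' i
    rw [heh, map_smul, LinearMap.smul_apply] at h1
    exact (smul_eq_zero.mp h1).resolve_left two_ne
  have lxf : ∀ i, br f (xv i) = 0 := by
    intro i
    have h1 := lxab h hh' f hf' i
    rw [hhf, map_smul, LinearMap.smul_apply] at h1
    exact (smul_eq_zero.mp h1).resolve_left two_ne
  have lxh : ∀ i, br h (xv i) = 0 := by
    intro i
    have h1 := lxab e he f hf' i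
    rwa [hef] at h1
  -- assemble: all brackets of R with s vanish
  have right0 : ∀ a ∈ ({e, f, h} : Set L), ∀ r ∈ R, br r a = 0 := by
    intro a ha r hr
    have hk : R ≤ LinearMap.ker (br.flip a) := by
      rw [hR, Submodule.span_le]
      rintro _ (⟨i, rfl⟩ | ⟨i, rfl⟩)
      · simpa [LinearMap.mem_ker] using rNS a ha (fv i) (fvN i)
      · simp only [Set.mem_insert_iff, Set.mem_singleton_iff] at ha
        rcases ha with rfl | rfl | rfl
        · simpa [LinearMap.mem_ker] using rxe i
        · simpa [LinearMap.mem_ker] using rxf i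
        · simpa [LinearMap.mem_ker] using rxh i
    exact hk hr
  have left0 : ∀ a ∈ ({e, f, h} : Set L), ∀ r ∈ R, br a r = 0 := by
    intro a ha r hr
    have hk : R ≤ LinearMap.ker (br a) := by
      rw [hR, Submodule.span_le]
      rintro _ (⟨i, rfl⟩ | ⟨i, rfl⟩)
      · simpa [LinearMap.mem_ker] using lNS a ha (fv i) (fvN i)
      · simp only [Set.mem_insert_iff, Set.mem_singleton_iff] at ha
        rcases ha with rfl | rfl | rfl
        · simpa [LinearMap.mem_ker] using lxe i
        · simpa [LinearMap.mem_ker] using lxf i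
        · simpa [LinearMap.mem_ker] using lxh i
    exact hk hr
  intro r hr
  exact ⟨right0 e he r hr, left0 e he r hr, right0 f hf' r hr, left0 f hf' r hr,
    right0 h hh' r hr, left0 h hh' r hr⟩
end

section
/- Let L be a Leibniz algebra with subalgebra s ≅ sl_2 (basis e,f,h with [e,h]=2e, [h,f]=2f, [e,f]=h, [f,e]=−h), and let v ∈ L be an element such that [v, e], [v, h], [v, f] and [e,v], [h,v], [f,v] all lie in a subspace W on which s acts trivially on both sides (i.e. [W,s] = [s,W] = 0). Then [v,e]=[e,v]=[v,h]=[h,v]=[v,f]=[f,v]=0. -/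
/-- Let `L` be a Leibniz algebra with a copy of `sl₂` spanned by `e, f, h`
(`[e,h] = 2e`, `[h,f] = 2f`, `[e,f] = h`, `[f,e] = -h`), and let `v ∈ L` be
such that all products of `v` with `e, f, h` (on both sides) lie in a
subspace `W` on which `sl₂` acts trivially on both sides. Then all these
products vanish. -/
theorem stmt_15 {L : Type*} [AddCommGroup L] [Module ℂ L]
    (br : L →ₗ[ℂ] L →ₗ[ℂ] L)
    (leib : ∀ x y z : L, br x (br y z) = br (br x y) z - br (br x z) y)
    (e f h : L)
    (hee : br e e = 0) (hff : br f f = 0) (hhh : br h h = 0)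
    (heh : br e h = (2 : ℂ) • e) (hhe : br h e = -((2 : ℂ) • e))
    (hhf : br h f = (2 : ℂ) • f) (hfh : br f h = -((2 : ℂ) • f))
    (hef : br e f = h) (hfe : br f e = -h)
    (W : Submodule ℂ L)
    (hW : ∀ w ∈ W, br w e = 0 ∧ br e w = 0 ∧ br w f = 0 ∧ br f w = 0 ∧
      br w h = 0 ∧ br h w = 0)
    (v : L)
    (hv : br v e ∈ W ∧ br e v ∈ W ∧ br v f ∈ W ∧ br f v ∈ W ∧
      br v h ∈ W ∧ br h v ∈ W) :
    br v e = 0 ∧ br e v = 0 ∧ br v f = 0 ∧ br f v = 0 ∧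
      br v h = 0 ∧ br h v = 0 := by
  obtain ⟨hve, hev, hvf, hfv, hvh, hhv⟩ := hv
  -- [v,e] = 0 : use [v,[e,h]] = [[v,e],h] - [[v,h],e]
  have Hve : br v e = 0 := by
    have := leib v e h
    rw [heh, (hW _ hve).2.2.2.2.1, (hW _ hvh).1, map_smul] at this
    simpa using this
  -- [v,f] = 0 : use [v,[h,f]] = [[v,h],f] - [[v,f],h]
  have Hvf : br v f = 0 := by
    have := leib v h f
    rw [hhf, (hW _ hvh).2.2.1, (hW _ hvf).2.2.2.2.1, map_smul] at this
    simpa using this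
  -- [v,h] = 0 : use [v,[e,f]] = [[v,e],f] - [[v,f],e]
  have Hvh : br v h = 0 := by
    have := leib v e f
    rw [hef, (hW _ hve).2.2.1, (hW _ hvf).1] at this
    simpa using this
  -- [e,v] = 0 : use [e,[v,h]] = [[e,v],h] - [[e,h],v]
  have Hev : br e v = 0 := by
    have := leib e v h
    rw [(hW _ hvh).2.1, (hW _ hev).2.2.2.2.1, heh, map_smul] at this
    simp only [LinearMap.smul_apply, LinearMap.neg_apply] at this
    have h2 : (2 : ℂ) • br e v = 0 := by linear_combination (norm := module) this
    simpa using h2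
  -- [f,v] = 0 : use [f,[v,h]] = [[f,v],h] - [[f,h],v]
  have Hfv : br f v = 0 := by
    have := leib f v h
    rw [(hW _ hvh).2.2.2.1, (hW _ hfv).2.2.2.2.1, hfh, map_neg, map_smul] at this
    simp only [LinearMap.smul_apply, LinearMap.neg_apply] at this
    have h2 : (2 : ℂ) • br f v = 0 := by linear_combination (norm := module) -this
    simpa using h2
  -- [h,v] = 0 : use [e,[v,f]] = [[e,v],f] - [[e,f],v]
  have Hhv : br h v = 0 := by
    have := leib e v f
    rw [(hW _ hvf).2.1, (hW _ hev).2.2.1, hef] at this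
    simpa [sub_eq_zero, eq_comm, neg_eq_zero] using this
  exact ⟨Hve, Hev, Hvf, Hfv, Hvh, Hhv⟩
end

section
/- Let R be a Leibniz algebra with basis {e_1,…,e_n, x_1,…,x_k} and multiplication as in the family R(N_{m_1,…,m_s}, s): [e^t_i, e^1_1] = e^t_{i+1} (1 ≤ t ≤ s, 1 ≤ i ≤ m_t − 1), [e^1_i, x_1] = i e^1_i (1 ≤ i ≤ m_1), [e^t_i, x_1] = (i−1) e^t_i (2 ≤ t ≤ s, 2 ≤ i ≤ m_t), [e^t_i, x_t] = e^t_i (2 ≤ t ≤ s, 1 ≤ i ≤ m_t), [x_1, e^1_1] = −e^1_1, all other products zero. Then this bracket satisfies the Leibniz identity and the center of R is trivial. -/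
/-- Basis index type for the algebra `R(N_{m_1,…,m_s}, s)`: the element
`Sum.inl ⟨t, i⟩` is the basis vector `e^{t+1}_{i+1}` (`0`-indexed version of
`e^t_i`, `1 ≤ t ≤ s`, `1 ≤ i ≤ m_t`), and `Sum.inr j` is `x_{j+1}`. -/
abbrev BidxR (s : ℕ) (m : Fin s → ℕ) : Type :=
  (Σ t : Fin s, Fin (m t)) ⊕ Fin s

/-- The coordinate vector of a basis element. -/
noncomputable def ebR (s : ℕ) (m : Fin s → ℕ) (b : BidxR s m) :
    BidxR s m → ℂ :=
  Pi.single b (1 : ℂ)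

/-- Structure constants of `R(N_{m_1,…,m_s}, s)` (0-indexed):
`[e^t_i, e^0_0] = e^t_{i+1}`; `[e^0_i, x_0] = (i+1)·e^0_i`;
`[e^t_i, x_0] = i·e^t_i` for `t ≠ 0`; `[e^t_i, x_t] = e^t_i` for `t ≠ 0`;
`[x_0, e^0_0] = -e^0_0`; all other products of basis vectors are zero. -/
noncomputable def cR (s : ℕ) (m : Fin s → ℕ) :
    BidxR s m → BidxR s m → (BidxR s m → ℂ) := fun b₁ b₂ =>
  match b₁, b₂ with
  | Sum.inl ⟨t, i⟩, Sum.inl ⟨t', i'⟩ =>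
      if (t' : ℕ) = 0 ∧ (i' : ℕ) = 0 then
        (if hlt : (i : ℕ) + 1 < m t then
          ebR s m (Sum.inl ⟨t, ⟨(i : ℕ) + 1, hlt⟩⟩)
        else 0)
      else 0
  | Sum.inl ⟨t, i⟩, Sum.inr j =>
      (if (j : ℕ) = 0 then
        (if (t : ℕ) = 0 then (((i : ℕ) + 1 : ℕ) : ℂ) else ((i : ℕ) : ℂ)) •
          ebR s m (Sum.inl ⟨t, i⟩)
      else 0) +
      (if (j : ℕ) = (t : ℕ) ∧ (t : ℕ) ≠ 0 then
        ebR s m (Sum.inl ⟨t, i⟩)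
      else 0)
  | Sum.inr j, Sum.inl ⟨t, i⟩ =>
      if (j : ℕ) = 0 ∧ (t : ℕ) = 0 ∧ (i : ℕ) = 0 then
        -ebR s m (Sum.inl ⟨t, i⟩)
      else 0
  | Sum.inr _, Sum.inr _ => 0

/-- The bilinear bracket on `R(N_{m_1,…,m_s}, s)` determined by the
structure constants `cR`. -/
noncomputable def brR (s : ℕ) (m : Fin s → ℕ) :
    (BidxR s m → ℂ) → (BidxR s m → ℂ) → (BidxR s m → ℂ) := fun u v =>
  ∑ b₁ : BidxR s m, ∑ b₂ : BidxR s m, (u b₁ * v b₂) • cR s m b₁ b₂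


lemma cR_inr (s : ℕ) (m : Fin s → ℕ) (b₁ b₂ : BidxR s m) (j : Fin s) :
    cR s m b₁ b₂ (Sum.inr j) = 0 := by
  rcases b₁ with ⟨t, i⟩ | j₁ <;> rcases b₂ with ⟨t', i'⟩ | j₂ <;>
    simp only [cR, ebR, Pi.add_apply, Pi.smul_apply, Pi.neg_apply, Pi.zero_apply] <;>
    first
    | rfl
    | (split_ifs <;> simp [Pi.single_apply])

lemma brR_apply_inr (s : ℕ) (m : Fin s → ℕ) (u v : BidxR s m → ℂ) (j : Fin s) :
    brR s m u v (Sum.inr j) = 0 := by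
  simp only [brR, Finset.sum_apply, Pi.smul_apply, cR_inr, smul_zero,
    Finset.sum_const_zero]

section
variable {s : ℕ} {m : Fin s → ℕ}

lemma inl_eq_inl_iff {t t' : Fin s} {i : Fin (m t)} {i' : Fin (m t')} :
    (Sum.inl ⟨t, i⟩ : BidxR s m) = Sum.inl ⟨t', i'⟩ ↔ t = t' ∧ (i : ℕ) = (i' : ℕ) := by
  rw [Sum.inl.injEq, Sigma.mk.inj_iff]
  exact and_congr_right fun h => Fin.heq_ext_iff (congrArg m h)

lemma sum_sigma_pick00 (hs : 0 < s) (hm : ∀ t, 0 < m t)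
    (f : (Σ t : Fin s, Fin (m t)) → ℂ) :
    ∑ σ : Σ t : Fin s, Fin (m t),
      (if (σ.1 : ℕ) = 0 ∧ (σ.2 : ℕ) = 0 then f σ else 0)
      = f ⟨⟨0, hs⟩, ⟨0, hm _⟩⟩ := by
  rw [Finset.sum_eq_single (⟨⟨0, hs⟩, ⟨0, hm _⟩⟩ : Σ t : Fin s, Fin (m t))]
  · simp
  · rintro ⟨t, i⟩ - hne
    rw [if_neg]
    rintro ⟨h1, h2⟩
    apply hne
    rcases t with ⟨tv, htv⟩
    subst h1
    exact congrArg _ (Fin.ext h2)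
  · intro h; exact absurd (Finset.mem_univ _) h

lemma sum_sigma_pick_at (t : Fin s) (c : ℕ) (hc : c < m t)
    (f : (Σ t : Fin s, Fin (m t)) → ℂ) :
    ∑ σ : Σ t : Fin s, Fin (m t),
      (if σ.1 = t ∧ (σ.2 : ℕ) = c then f σ else 0) = f ⟨t, ⟨c, hc⟩⟩ := by
  rw [Finset.sum_eq_single (⟨t, ⟨c, hc⟩⟩ : Σ t : Fin s, Fin (m t))]
  · simp
  · rintro ⟨t', i'⟩ - hne
    rw [if_neg]
    rintro ⟨rfl, h2⟩
    exact hne (congrArg _ (Fin.ext h2))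
  · intro h; exact absurd (Finset.mem_univ _) h

lemma sum_fin_pick' {n : ℕ} (c : ℕ) (f : Fin n → ℂ) :
    ∑ j : Fin n, (if (j : ℕ) = c then f j else 0)
      = if h : c < n then f ⟨c, h⟩ else 0 := by
  split_ifs with h
  · rw [Finset.sum_eq_single (⟨c, h⟩ : Fin n)]
    · simp
    · intro b _ hb; exact if_neg fun hc => hb (Fin.ext hc)
    · intro h'; exact absurd (Finset.mem_univ _) h'
  · exact Finset.sum_eq_zero fun j _ => if_neg fun hc => h (by rw [← hc]; exact j.isLt)

end

section
variable {s : ℕ} {m : Fin s → ℕ}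

lemma sum_ite_const {α : Type*} [Fintype α] (P : Prop) [Decidable P] (f : α → ℂ) :
    ∑ x : α, (if P then f x else 0) = if P then ∑ x : α, f x else 0 := by
  split_ifs <;> simp

lemma sum_sigma_pick00' (hs : 0 < s) (hm : ∀ t, 0 < m t)
    (f : (Σ t : Fin s, Fin (m t)) → ℂ) :
    ∑ σ : Σ t : Fin s, Fin (m t),
      (if (σ.1 : ℕ) = 0 then if (σ.2 : ℕ) = 0 then f σ else 0 else 0)
      = f ⟨⟨0, hs⟩, ⟨0, hm _⟩⟩ := by
  rw [← sum_sigma_pick00 hs hm f]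
  exact Finset.sum_congr rfl fun σ _ => by split_ifs <;> tauto

lemma sum_sigma_pick_at' (t : Fin s) (i : Fin (m t))
    (f : (Σ t : Fin s, Fin (m t)) → ℂ) :
    ∑ σ : Σ t : Fin s, Fin (m t),
      (if σ.1 = t then if (σ.2 : ℕ) = (i : ℕ) then f σ else 0 else 0)
      = f ⟨t, i⟩ := by
  have := sum_sigma_pick_at t (i : ℕ) i.isLt f
  simp only [Fin.eta] at this
  rw [← this]
  exact Finset.sum_congr rfl fun σ _ => by split_ifs <;> tauto

lemma sum_sigma_pick_succ (t : Fin s) (i : Fin (m t))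
    (f : (Σ t : Fin s, Fin (m t)) → ℂ) :
    ∑ σ : Σ t : Fin s, Fin (m t),
      (if σ.1 = t then if (σ.2 : ℕ) + 1 = (i : ℕ) then f σ else 0 else 0)
      = if h : 0 < (i : ℕ) then
          f ⟨t, ⟨(i : ℕ) - 1, lt_of_le_of_lt (Nat.sub_le _ _) i.isLt⟩⟩
        else 0 := by
  split_ifs with h
  · rw [← sum_sigma_pick_at t ((i : ℕ) - 1) (lt_of_le_of_lt (Nat.sub_le _ _) i.isLt) f]
    refine Finset.sum_congr rfl fun σ _ => ?_
    rcases eq_or_ne σ.1 t with h1 | h1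
    · rw [if_pos h1,
        if_congr (show (σ.1 = t ∧ (σ.2 : ℕ) = (i : ℕ) - 1) ↔ ((σ.2 : ℕ) = (i : ℕ) - 1)
          from ⟨fun h' => h'.2, fun h' => ⟨h1, h'⟩⟩) rfl rfl]
      exact if_congr (by omega) rfl rfl
    · rw [if_neg h1, if_neg (fun hc => h1 hc.1)]
  · refine Finset.sum_eq_zero fun σ _ => ?_
    split_ifs with h1 h2
    · omega
    · rfl
    · rfl

lemma sum_fin_pick (a : Fin s) (f : Fin s → ℂ) :
    ∑ j : Fin s, (if (j : ℕ) = (a : ℕ) then f j else 0) = f a := by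
  rw [sum_fin_pick' (a : ℕ) f, dif_pos a.isLt, Fin.eta]

lemma sum_fin_pick0 (hs : 0 < s) (f : Fin s → ℂ) :
    ∑ j : Fin s, (if (j : ℕ) = 0 then f j else 0) = f ⟨0, hs⟩ := by
  rw [sum_fin_pick' 0 f, dif_pos hs]

lemma cR_ll (σ₁ σ₂ : Σ t : Fin s, Fin (m t)) (t : Fin s) (i : Fin (m t)) :
    cR s m (Sum.inl σ₁) (Sum.inl σ₂) (Sum.inl ⟨t, i⟩) =
      if σ₁.1 = t then
        if (σ₁.2 : ℕ) + 1 = (i : ℕ) then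
          (if (σ₂.1 : ℕ) = 0 then if (σ₂.2 : ℕ) = 0 then 1 else 0 else 0)
        else 0
      else 0 := by
  obtain ⟨t₁, i₁⟩ := σ₁
  obtain ⟨t₂, i₂⟩ := σ₂
  simp only [cR, ebR]
  by_cases h1 : (t₂ : ℕ) = 0 ∧ (i₂ : ℕ) = 0
  · rw [if_pos h1]
    by_cases hlt : (i₁ : ℕ) + 1 < m t₁
    · rw [dif_pos hlt, Pi.single_apply]
      simp only [inl_eq_inl_iff, h1.1, h1.2, if_true]
      by_cases h2 : t₁ = t
      · by_cases h3 : (i₁ : ℕ) + 1 = (i : ℕ)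
        · rw [if_pos ⟨h2.symm, by omega⟩, if_pos h2, if_pos h3]
        · rw [if_neg (fun hc => h3 (by omega)), if_pos h2, if_neg h3]
      · rw [if_neg (fun hc => h2 hc.1.symm), if_neg h2]
    · rw [dif_neg hlt]
      by_cases h2 : t₁ = t
      · subst h2
        rw [Pi.zero_apply, if_pos rfl,
          if_neg (fun h3 => hlt (by have := i.isLt; omega))]
      · rw [Pi.zero_apply, if_neg h2]
  · rw [if_neg h1, Pi.zero_apply]
    rcases not_and_or.mp h1 with h | h
    · split_ifs with h2 h3 h4 <;> first | rfl | exact absurd h4 h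
    · split_ifs with h2 h3 h4 h5 <;> first | rfl | exact absurd h5 h

lemma cR_lr (σ₁ : Σ t : Fin s, Fin (m t)) (j : Fin s) (t : Fin s) (i : Fin (m t)) :
    cR s m (Sum.inl σ₁) (Sum.inr j) (Sum.inl ⟨t, i⟩) =
      if σ₁.1 = t then
        if (σ₁.2 : ℕ) = (i : ℕ) then
          ((if (j : ℕ) = 0 then
              (if (σ₁.1 : ℕ) = 0 then (((σ₁.2 : ℕ) + 1 : ℕ) : ℂ)
                else ((σ₁.2 : ℕ) : ℂ))
            else 0)
            + (if (j : ℕ) = (σ₁.1 : ℕ) then if (σ₁.1 : ℕ) ≠ 0 then 1 else 0 else 0))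
        else 0
      else 0 := by
  obtain ⟨t₁, i₁⟩ := σ₁
  simp only [cR, ebR, Pi.add_apply]
  by_cases h2 : t₁ = t
  · by_cases h3 : (i₁ : ℕ) = (i : ℕ)
    · rw [if_pos h2, if_pos h3]
      have he : (Sum.inl ⟨t, i⟩ : BidxR s m) = Sum.inl ⟨t₁, i₁⟩ :=
        inl_eq_inl_iff.mpr ⟨h2.symm, h3.symm⟩
      split_ifs with g1 g2 g3 g4 <;>
        simp_all [Pi.single_apply, he, ite_and] <;> tauto
    · rw [if_pos h2, if_neg h3]
      have he : (Sum.inl ⟨t, i⟩ : BidxR s m) ≠ Sum.inl ⟨t₁, i₁⟩ := by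
        rw [Ne, inl_eq_inl_iff]; rintro ⟨-, hc⟩; exact h3 hc.symm
      split_ifs <;> simp_all [Pi.single_apply, he]
  · rw [if_neg h2]
    have he : (Sum.inl ⟨t, i⟩ : BidxR s m) ≠ Sum.inl ⟨t₁, i₁⟩ := by
      rw [Ne, inl_eq_inl_iff]; rintro ⟨hc, -⟩; exact h2 hc.symm
    split_ifs <;> simp_all [Pi.single_apply, he]

lemma cR_rl (j : Fin s) (σ₂ : Σ t : Fin s, Fin (m t)) (t : Fin s) (i : Fin (m t)) :
    cR s m (Sum.inr j) (Sum.inl σ₂) (Sum.inl ⟨t, i⟩) =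
      if (σ₂.1 : ℕ) = 0 then
        if (σ₂.2 : ℕ) = 0 then
          (if (j : ℕ) = 0 then
             if t = σ₂.1 then if (i : ℕ) = (σ₂.2 : ℕ) then -1 else 0 else 0
           else 0)
        else 0
      else 0 := by
  obtain ⟨t₂, i₂⟩ := σ₂
  simp only [cR, ebR, Pi.neg_apply]
  by_cases h1 : (j : ℕ) = 0 ∧ (t₂ : ℕ) = 0 ∧ (i₂ : ℕ) = 0
  · rw [if_pos h1]
    simp only [Pi.neg_apply, Pi.single_apply, inl_eq_inl_iff, h1.1, h1.2.1, h1.2.2]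
    split_ifs <;> simp_all <;> tauto
  · rw [if_neg h1, Pi.zero_apply]
    split_ifs <;> simp_all <;> tauto

lemma cR_rr (j₁ j₂ : Fin s) :
    cR s m (Sum.inr j₁) (Sum.inr j₂) = 0 := rfl

end

section
variable {s : ℕ} {m : Fin s → ℕ}

lemma brR_inl (hs : 0 < s) (hm : ∀ t, 0 < m t) (u v : BidxR s m → ℂ)
    (t : Fin s) (i : Fin (m t)) :
    brR s m u v (Sum.inl ⟨t, i⟩) =
      v (Sum.inl ⟨⟨0, hs⟩, ⟨0, hm _⟩⟩) *
        (if h : 0 < (i : ℕ) then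
          u (Sum.inl ⟨t, ⟨(i : ℕ) - 1, lt_of_le_of_lt (Nat.sub_le _ _) i.isLt⟩⟩)
        else 0)
      + u (Sum.inl ⟨t, i⟩) *
        (v (Sum.inr ⟨0, hs⟩) *
          (if (t : ℕ) = 0 then (((i : ℕ) + 1 : ℕ) : ℂ) else ((i : ℕ) : ℂ))
          + (if (t : ℕ) ≠ 0 then v (Sum.inr t) else 0))
      + (if t = ⟨0, hs⟩ ∧ (i : ℕ) = 0 then
          -(u (Sum.inr ⟨0, hs⟩) * v (Sum.inl ⟨⟨0, hs⟩, ⟨0, hm _⟩⟩)) else 0) := by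
  simp only [brR, Fintype.sum_sum_type, Finset.sum_apply, Pi.add_apply, Pi.smul_apply, smul_eq_mul,
    cR_ll, cR_lr, cR_rl, cR_rr, Pi.zero_apply, mul_zero, Finset.sum_const_zero, add_zero]
  simp only [mul_ite, ite_mul, mul_zero, zero_mul, mul_one, one_mul, mul_neg, mul_add,
    add_mul, Finset.sum_add_distrib, sum_ite_const, Finset.sum_const_zero]
  simp only [sum_sigma_pick00' hs hm, sum_sigma_pick_at', sum_sigma_pick_succ,
    sum_fin_pick, sum_fin_pick0 hs]
  split_ifs <;> first | ring1 | (exfalso; omega) | tauto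

end

set_option maxHeartbeats 2000000 in
/-- The bracket of `R(N_{m_1,…,m_s}, s)` satisfies the Leibniz identity and
the center of `R(N_{m_1,…,m_s}, s)` is trivial. -/
theorem stmt_19 (s : ℕ) (hs : 0 < s) (m : Fin s → ℕ) (hm : ∀ t, 0 < m t) :
    (∀ u v w : BidxR s m → ℂ,
      brR s m u (brR s m v w)
        = brR s m (brR s m u v) w - brR s m (brR s m u w) v) ∧
    (∀ v : BidxR s m → ℂ,
      (∀ w : BidxR s m → ℂ, brR s m v w = 0 ∧ brR s m w v = 0) → v = 0) := by
  constructor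
  · intro u v w
    funext b
    rcases b with ⟨t, i⟩ | j
    · simp only [Pi.sub_apply, brR_inl hs hm, brR_apply_inr, Fin.ext_iff, Fin.val_mk]
      by_cases hi : 0 < (i : ℕ)
      · obtain ⟨k, hk⟩ : ∃ k, (i : ℕ) = k + 1 := ⟨(i : ℕ) - 1, by omega⟩
        simp only [hk, Nat.add_sub_cancel, dif_pos hi, Nat.lt_irrefl, dite_false,
          Nat.zero_lt_succ, dite_true, lt_self_iff_false, Nat.succ_ne_zero, and_false,
          and_true, true_and, false_and, if_false, if_true, ne_eq, not_true, not_false_iff]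
        split_ifs <;> push_cast <;> first | ring1 | (exfalso; omega)
      · have hi0 : (i : ℕ) = 0 := by omega
        simp only [hi0, dif_neg hi, Nat.lt_irrefl, dite_false, lt_self_iff_false,
          Nat.succ_ne_zero, and_false, and_true, true_and, false_and, if_false, if_true,
          ne_eq, not_true, not_false_iff]
        split_ifs <;> push_cast <;> first | ring1 | (exfalso; omega)
    · simp only [Pi.sub_apply, brR_apply_inr, sub_zero]
  · intro v hv
    funext b
    rcases b with ⟨t, i⟩ | j
    · by_cases ht : (t : ℕ) = 0
      · have h := congrFun ((hv (ebR s m (Sum.inr ⟨0, hs⟩))).1) (Sum.inl ⟨t, i⟩)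
        rw [brR_inl hs hm] at h
        simp only [ebR, Pi.single_apply, Pi.zero_apply, if_pos ht] at h
        simp only [Pi.zero_apply]
        simp [ht] at h
        rcases h with h' | h'
        · exact h'
        · exact absurd h' (by exact_mod_cast Nat.succ_ne_zero (i : ℕ))
      · have h := congrFun ((hv (ebR s m (Sum.inr t))).1) (Sum.inl ⟨t, i⟩)
        rw [brR_inl hs hm] at h
        simp only [ebR, Pi.single_apply, Pi.zero_apply] at h
        simp only [Pi.zero_apply]
        simpa [Fin.ext_iff, ht, (Ne.symm ht : ¬(0:ℕ) = (t:ℕ))] using h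
    · by_cases hj : (j : ℕ) = 0
      · have h := congrFun ((hv (ebR s m (Sum.inl ⟨⟨0, hs⟩, ⟨0, hm _⟩⟩))).2)
          (Sum.inl ⟨⟨0, hs⟩, ⟨0, hm _⟩⟩)
        rw [brR_inl hs hm] at h
        simp only [ebR, Pi.single_apply, Pi.zero_apply] at h
        simp only [Pi.zero_apply]
        have hj' : j = ⟨0, hs⟩ := Fin.ext hj
        subst hj'
        simpa using h
      · have h := congrFun ((hv (ebR s m (Sum.inl ⟨j, ⟨0, hm j⟩⟩))).2)
          (Sum.inl ⟨j, ⟨0, hm j⟩⟩)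
        rw [brR_inl hs hm] at h
        simp only [ebR, Pi.single_apply, Pi.zero_apply] at h
        simp only [Pi.zero_apply]
        simpa [Fin.ext_iff, hj] using h
end
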